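/- Let n ≥ 3, v > 0 and Δx > 0, and consider the directed graph on nodes 0, 1, …, n−1 whose edges are i → i+1 with weight v/(2Δx) and i → i−1 with weight −v/(2Δx) (for all indices where both endpoints exist). Then for every vector u ∈ ℝⁿ and every interior node i with 1 ≤ i ≤ n−2, the graph advection operator satisfies (L_adv u)_i = v (u_{i+1} − u_{i−1}) / (2Δx); that is, applying L_adv on this graph reproduces the spatial part of the second order central difference scheme for linear advection. -/
import Mathlib


open Matrix BigOperators

/-- Graph advection operator `L_adv = D_out - A_in`, where `A_in = W` and
`(D_out) i i = ∑ j, W j i`. -/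
def Ladv (n : ℕ) (W : Matrix (Fin n) (Fin n) ℝ) : Matrix (Fin n) (Fin n) ℝ :=
  Matrix.diagonal (fun i => ∑ j, W j i) - W

/-- Weight matrix of the graph for the second order central scheme: edges `i → i+1`
with weight `v/(2Δx)` and edges `i → i-1` with weight `-v/(2Δx)` (here `W i j` is
the weight of the edge from `j` to `i`). -/
noncomputable def centralW (n : ℕ) (v Δx : ℝ) : Matrix (Fin n) (Fin n) ℝ :=
  fun i j =>
    (if (i : ℕ) = (j : ℕ) + 1 then v / (2 * Δx) else 0) +
    (if (i : ℕ) + 1 = (j : ℕ) then -v / (2 * Δx) else 0)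

/-- On this signed directed graph, `L_adv` reproduces the spatial part of the second
order central difference scheme `(L_adv u)_i = v (u_{i+1} - u_{i-1}) / (2Δx)` at
every interior node. -/
theorem stmt9 (n : ℕ) (hn : 3 ≤ n) (v Δx : ℝ) (hv : 0 < v) (hΔx : 0 < Δx)
    (u : Fin n → ℝ) (i : Fin n) (h1 : 1 ≤ (i : ℕ)) (h2 : (i : ℕ) ≤ n - 2) :
    (Ladv n (centralW n v Δx) *ᵥ u) i
      = v * (u ⟨(i : ℕ) + 1, by omega⟩
              - u ⟨(i : ℕ) - 1, lt_of_le_of_lt (Nat.sub_le _ _) i.isLt⟩) / (2 * Δx) := by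
  have hip : (i : ℕ) + 1 < n := by omega
  have him : (i : ℕ) - 1 < n := by omega
  have k1 : ∀ j : Fin n, ((i : ℕ) = (j : ℕ) + 1) = (j = ⟨(i : ℕ) - 1, him⟩) := by
    intro j; exact propext (by simp only [Fin.ext_iff]; try omega)
  have k2 : ∀ j : Fin n, ((i : ℕ) + 1 = (j : ℕ)) = (j = ⟨(i : ℕ) + 1, hip⟩) := by
    intro j; exact propext (by simp only [Fin.ext_iff]; try omega)
  have k3 : ∀ j : Fin n, ((j : ℕ) = (i : ℕ) + 1) = (j = ⟨(i : ℕ) + 1, hip⟩) := by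
    intro j; exact propext (by simp only [Fin.ext_iff]; try omega)
  have k4 : ∀ j : Fin n, ((j : ℕ) + 1 = (i : ℕ)) = (j = ⟨(i : ℕ) - 1, him⟩) := by
    intro j; exact propext (by simp only [Fin.ext_iff]; try omega)
  simp only [Ladv, Matrix.mulVec, dotProduct, Matrix.sub_apply, Matrix.diagonal_apply,
    centralW, k1, k2, k3, k4]
  simp only [sub_mul, add_mul, ite_mul, zero_mul, Finset.sum_sub_distrib,
    Finset.sum_add_distrib, Finset.sum_ite_eq, Finset.sum_ite_eq', Finset.mem_univ, if_true]
  ring
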